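/- Let Y be a Hausdorff topological space and f : ℝ² → Y a continuous map. Let (U_i)_{i ∈ ℕ} be a sequence of pairwise disjoint nonempty open subsets of ℝ², and for each i let x_i ∈ U_i. Suppose the sequence (x_i) is bounded and that f(x_i) converges to a point p ∈ Y. Then p ∈ limsup_i f(Fr U_i); that is, every neighborhood of p intersects f(Fr U_i) for infinitely many i. -/

import Mathlib

/-!
Pass to a cluster point `q` of the bounded sequence `x`; by continuity and uniqueness of limits,
`f q = p`. Given a neighbourhood `N` of `p`, take a connected neighbourhood `V` of `q` inside
`f ⁻¹' N`. Infinitely many `x i` lie in `V`, and by disjointness `q` lies in at most one `U i`,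
so for infinitely many `i` the connected set `V` meets both `U i` and its complement, hence meets
`frontier (U i)`.
-/

open Filter Topology Set

theorem IsPreconnected.inter_frontier_nonempty {X : Type*} [TopologicalSpace X] {s u : Set X}
    (hs : IsPreconnected s) (hu : IsOpen u) (hsu : (s ∩ u).Nonempty) (hsu' : ¬s ⊆ u) :
    (s ∩ frontier u).Nonempty := by
  contrapose! hsu'
  refine hs.subset_of_closure_inter_subset hu hsu fun z ⟨hzu, hzs⟩ => ?_
  by_contra hz
  exact hsu'.subset ⟨hzs, hu.frontier_eq ▸ ⟨hzu, hz⟩⟩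

theorem MapClusterPt.eq_of_tendsto {X α : Type*} [TopologicalSpace X] [T2Space X]
    {l : Filter α} {u : α → X} {x y : X} (hx : MapClusterPt x l u) (hy : Tendsto u l (𝓝 y)) :
    x = y := by
  by_contra hxy
  exact (hx.clusterPt.mono hy).ne (disjoint_iff.1 (disjoint_nhds_nhds.2 hxy))

theorem infinite_setOf_inter_frontier_nonempty {X ι : Type*} [TopologicalSpace X]
    [LocallyConnectedSpace X] {U : ι → Set X} (hopen : ∀ i, IsOpen (U i))
    (hdisj : Pairwise (Function.onFun Disjoint U)) {x : ι → X} (hx : ∀ i, x i ∈ U i) {q : X}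
    (hq : MapClusterPt q cofinite x) {W : Set X} (hW : W ∈ 𝓝 q) :
    {i | (W ∩ frontier (U i)).Nonempty}.Infinite := by
  set V := connectedComponentIn W q
  have hV : IsPreconnected V := isPreconnected_connectedComponentIn
  have hqV : q ∈ V := mem_connectedComponentIn (mem_of_mem_nhds hW)
  have hxV : {i | x i ∈ V}.Infinite :=
    frequently_cofinite_iff_infinite.1 (hq.frequently (connectedComponentIn_mem_nhds hW))
  have hqU : {i | q ∈ U i}.Subsingleton := fun i hi j hj =>
    by_contra fun hij => (hdisj hij).notMem_of_mem_left hi hj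
  refine (hxV.sdiff hqU.finite).mono ?_
  rintro i ⟨hxi, hqi⟩
  obtain ⟨z, hzV, hzU⟩ := hV.inter_frontier_nonempty (hopen i) ⟨x i, hxi, hx i⟩
    fun hVU => hqi (hVU hqV)
  exact ⟨z, connectedComponentIn_subset W q hzV, hzU⟩

theorem stmt_3_general {Y : Type*} [TopologicalSpace Y] [T2Space Y]
    (f : ℝ × ℝ → Y) (hf : Continuous f)
    (U : ℕ → Set (ℝ × ℝ))
    (hopen : ∀ i, IsOpen (U i))
    (hdisj : Pairwise (Function.onFun Disjoint U))
    (x : ℕ → ℝ × ℝ) (hx : ∀ i, x i ∈ U i)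
    (hbdd : Bornology.IsBounded (Set.range x))
    (p : Y) (hlim : Tendsto (fun i => f (x i)) atTop (𝓝 p)) :
    ∀ N ∈ 𝓝 p, {i : ℕ | (f '' frontier (U i) ∩ N).Nonempty}.Infinite := by
  intro N hN
  obtain ⟨q, -, hq⟩ := hbdd.isCompact_closure.exists_mapClusterPt_of_frequently
    (l := cofinite) (Frequently.of_forall fun i => subset_closure (mem_range_self i))
  have hfq : f q = p :=
    (hq.continuousAt_comp hf.continuousAt).eq_of_tendsto (Nat.cofinite_eq_atTop ▸ hlim)
  refine (infinite_setOf_inter_frontier_nonempty hopen hdisj hx hq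
    (hf.continuousAt.preimage_mem_nhds (hfq ▸ hN))).mono ?_
  rintro i ⟨z, hzN, hzU⟩
  exact ⟨f z, mem_image_of_mem f hzU, hzN⟩

/-- Case 1 of Lemma 2.2, for an arbitrary continuous map. Let `Y` be
Hausdorff and `f : ℝ² → Y` continuous. If `(U i)` are pairwise disjoint nonempty open subsets
of the plane, `x i ∈ U i`, the sequence `(x i)` is bounded, and `f (x i) → p`, then every
neighborhood of `p` meets `f '' frontier (U i)` for infinitely many `i`; i.e.
`p ∈ limsup f (Fr U i)`. -/
theorem stmt_3 {Y : Type*} [TopologicalSpace Y] [T2Space Y]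
    (f : ℝ × ℝ → Y) (hf : Continuous f)
    (U : ℕ → Set (ℝ × ℝ))
    (hopen : ∀ i, IsOpen (U i))
    (hne : ∀ i, (U i).Nonempty)
    (hdisj : Pairwise (Function.onFun Disjoint U))
    (x : ℕ → ℝ × ℝ) (hx : ∀ i, x i ∈ U i)
    (hbdd : Bornology.IsBounded (Set.range x))
    (p : Y) (hlim : Tendsto (fun i => f (x i)) atTop (𝓝 p)) :
    ∀ N ∈ 𝓝 p, {i : ℕ | (f '' frontier (U i) ∩ N).Nonempty}.Infinite :=
  stmt_3_general f hf U hopen hdisj x hx hbdd p hlim
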